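/- Let |ψ_θ⟩ = cos θ|00⟩ + sin θ|11⟩ with θ ∈ (0, arctan(2^{−1/4})], and let Ξ: A → A₁A₂ be the qubit channel with Choi matrix J = |v⟩⟨v|, |v⟩ = |000⟩ + (1/√2)|101⟩ + (1/√2)|110⟩. Then Ξ is a valid symmetric broadcasting channel and F(ψ_θ, tr_{\A₁B}(Ξ⊗id_B)(ψ_θ)) = cos²θ + (sin²θ)/√2. -/

import Mathlib

open scoped Matrix Kronecker ComplexOrder
open Matrix

noncomputable section

namespace QIT

variable {A B A' B' O : Type*}

/-- A density operator: positive semidefinite with unit trace. -/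
def IsDensity [Fintype A] (ρ : Matrix A A ℂ) : Prop :=
  ρ.PosSemidef ∧ ρ.trace = 1

open Classical in
/-- Square root of a positive semidefinite matrix (junk value otherwise). -/
def msqrt [Fintype A] [DecidableEq A] (M : Matrix A A ℂ) : Matrix A A ℂ :=
  if h : M.PosSemidef then
    (h.1.eigenvectorUnitary : Matrix A A ℂ) * diagonal ((↑) ∘ Real.sqrt ∘ h.1.eigenvalues) *
      (star h.1.eigenvectorUnitary : Matrix A A ℂ) else 0

/-- Trace norm ‖M‖₁ = tr √(MᴴM). -/
def traceNorm [Fintype A] [DecidableEq A] (M : Matrix A A ℂ) : ℝ :=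
  (msqrt (Mᴴ * M)).trace.re

/-- Fidelity F(ρ,σ) = tr √(√ρ σ √ρ). -/
def fidelity [Fintype A] [DecidableEq A] (ρ σ : Matrix A A ℂ) : ℝ :=
  (msqrt (msqrt ρ * σ * msqrt ρ)).trace.re

/-- Von Neumann entropy in bits, via eigenvalues. -/
def entropy [Fintype A] [DecidableEq A] (ρ : Matrix A A ℂ) : ℝ :=
  if h : ρ.IsHermitian then -∑ i, (h.eigenvalues i) * Real.logb 2 (h.eigenvalues i) else 0

/-- Partial trace over the second tensor factor. -/
def ptraceB [Fintype B] (M : Matrix (A × B) (A × B) ℂ) : Matrix A A ℂ :=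
  of fun i j => ∑ b, M (i, b) (j, b)

/-- Partial trace over the first tensor factor. -/
def ptraceA [Fintype A] (M : Matrix (A × B) (A × B) ℂ) : Matrix B B ℂ :=
  of fun i j => ∑ a, M (a, i) (a, j)

/-- Quantum mutual information I(A:B) = H(A) + H(B) - H(AB). -/
def mutualInfo [Fintype A] [DecidableEq A] [Fintype B] [DecidableEq B]
    (ρ : Matrix (A × B) (A × B) ℂ) : ℝ :=
  entropy (ptraceB ρ) + entropy (ptraceA ρ) - entropy ρ

/-- Binary entropy function (base 2). -/
def binEntropy (x : ℝ) : ℝ := -(x * Real.logb 2 x) - (1 - x) * Real.logb 2 (1 - x)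

/-- Extension Φ ⊗ id_B of a linear map on matrices. -/
def lext [Fintype A] [Fintype A'] [Fintype B]
    (Φ : Matrix A A ℂ →ₗ[ℂ] Matrix A' A' ℂ) :
    Matrix (A × B) (A × B) ℂ →ₗ[ℂ] Matrix (A' × B) (A' × B) ℂ where
  toFun M := of fun p q => Φ (of fun i j => M (i, p.2) (j, q.2)) p.1 q.1
  map_add' M N := by
    ext p q
    have h : (of fun i j => (M + N) (i, p.2) (j, q.2)) =
        (of fun i j => M (i, p.2) (j, q.2)) + (of fun i j => N (i, p.2) (j, q.2)) := rfl
    simp only [of_apply, Matrix.add_apply]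
    rw [show (of fun i j => M (i, p.2) (j, q.2) + N (i, p.2) (j, q.2)) =
        (of fun i j => M (i, p.2) (j, q.2)) + (of fun i j => N (i, p.2) (j, q.2)) from rfl,
      map_add]
    simp [Matrix.add_apply]
  map_smul' c M := by
    ext p q
    simp only [of_apply, Matrix.smul_apply, RingHom.id_apply]
    rw [show (of fun i j => c • M (i, p.2) (j, q.2)) =
        c • (of fun i j => M (i, p.2) (j, q.2)) from rfl, LinearMap.map_smul]
    simp [Matrix.smul_apply]

/-- Extension id_A ⊗ Ψ of a linear map on matrices. -/
def rext [Fintype B] [Fintype B'] [Fintype A]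
    (Ψ : Matrix B B ℂ →ₗ[ℂ] Matrix B' B' ℂ) :
    Matrix (A × B) (A × B) ℂ →ₗ[ℂ] Matrix (A × B') (A × B') ℂ where
  toFun M := of fun p q => Ψ (of fun i j => M (p.1, i) (q.1, j)) p.2 q.2
  map_add' M N := by
    ext p q
    simp only [of_apply, Matrix.add_apply]
    rw [show (of fun i j => M (p.1, i) (q.1, j) + N (p.1, i) (q.1, j)) =
        (of fun i j => M (p.1, i) (q.1, j)) + (of fun i j => N (p.1, i) (q.1, j)) from rfl,
      map_add]
    simp [Matrix.add_apply]
  map_smul' c M := by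
    ext p q
    simp only [of_apply, Matrix.smul_apply, RingHom.id_apply]
    rw [show (of fun i j => c • M (p.1, i) (q.1, j)) =
        c • (of fun i j => M (p.1, i) (q.1, j)) from rfl, LinearMap.map_smul]
    simp [Matrix.smul_apply]

/-- Tensor product E ⊗ F of two maps on matrices. -/
def tensorMap [Fintype A] [Fintype A'] [Fintype B] [Fintype B']
    (E : Matrix A A ℂ →ₗ[ℂ] Matrix A' A' ℂ) (F : Matrix B B ℂ →ₗ[ℂ] Matrix B' B' ℂ) :
    Matrix (A × B) (A × B) ℂ →ₗ[ℂ] Matrix (A' × B') (A' × B') ℂ :=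
  (rext F).comp (lext E)

/-- Completely positive trace preserving map. -/
def IsCPTP [Fintype A] [Fintype A'] (Φ : Matrix A A ℂ →ₗ[ℂ] Matrix A' A' ℂ) : Prop :=
  (∀ (k : ℕ) (M : Matrix (A × Fin k) (A × Fin k) ℂ), M.PosSemidef →
      (lext (B := Fin k) Φ M).PosSemidef) ∧
  ∀ M : Matrix A A ℂ, (Φ M).trace = M.trace

/-- Diamond norm via finite-dimensional ancillas. -/
def diamondNorm [Fintype A] [DecidableEq A] [Fintype A'] [DecidableEq A']
    (Φ : Matrix A A ℂ →ₗ[ℂ] Matrix A' A' ℂ) : ℝ :=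
  sSup {r | ∃ (k : ℕ) (X : Matrix (A × Fin k) (A × Fin k) ℂ),
    traceNorm X = 1 ∧ r = traceNorm (lext (B := Fin k) Φ X)}

/-- Choi–Jamiołkowski matrix of a map. -/
def choi [Fintype A] [DecidableEq A] (Φ : Matrix A A ℂ →ₗ[ℂ] Matrix O O ℂ) :
    Matrix (A × O) (A × O) ℂ :=
  of fun p q => Φ (single p.1 q.1 1) p.2 q.2

/-- The map associated to a Choi matrix. -/
def choiAction [Fintype A] (J : Matrix (A × O) (A × O) ℂ) :
    Matrix A A ℂ →ₗ[ℂ] Matrix O O ℂ where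
  toFun ρ := of fun o o' => ∑ i, ∑ j, ρ i j * J (i, o) (j, o')
  map_add' M N := by
    ext o o'
    simp [Matrix.add_apply, add_mul, Finset.sum_add_distrib]
  map_smul' c M := by
    ext o o'
    simp [Matrix.smul_apply, Finset.mul_sum, mul_assoc]

/-- Permutation unitary W_π on n tensor copies: W_π|f⟩ = |f ∘ π⁻¹⟩. -/
def permMat (n : ℕ) (A : Type*) [DecidableEq A] (π : Equiv.Perm (Fin n)) :
    Matrix (Fin n → A) (Fin n → A) ℂ :=
  of fun g f => if g = f ∘ π.symm then 1 else 0

/-- Partial trace keeping only the j-th copy and the system B. -/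
def reduceJ [Fintype A] [DecidableEq A] [Fintype B] {n : ℕ} (j : Fin n)
    (M : Matrix ((Fin n → A) × B) ((Fin n → A) × B) ℂ) : Matrix (A × B) (A × B) ℂ :=
  of fun p q => ∑ f : Fin n → A,
    if f j = p.1 then M (f, p.2) (Function.update f j q.1, q.2) else 0

/-- Partial trace keeping only the j-th copy (no side system). -/
def reduceJ0 [Fintype A] [DecidableEq A] {n : ℕ} (j : Fin n)
    (M : Matrix (Fin n → A) (Fin n → A) ℂ) : Matrix A A ℂ :=
  of fun a a' => ∑ f : Fin n → A,
    if f j = a then M f (Function.update f j a') else 0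

/-- Partial trace keeping the j-th copy on each side. -/
def reduceJJ [Fintype A] [DecidableEq A] [Fintype B] [DecidableEq B] {n : ℕ} (j : Fin n)
    (M : Matrix ((Fin n → A) × (Fin n → B)) ((Fin n → A) × (Fin n → B)) ℂ) :
    Matrix (A × B) (A × B) ℂ :=
  of fun p q => ∑ f : Fin n → A, ∑ g : Fin n → B,
    if f j = p.1 ∧ g j = p.2 then
      M (f, g) (Function.update f j q.1, Function.update g j q.2) else 0

/-- A symmetric broadcasting channel: covariant under all permutations of outputs. -/
def IsSymmetricBC [Fintype A] [DecidableEq A] {n : ℕ}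
    (Λ : Matrix A A ℂ →ₗ[ℂ] Matrix (Fin n → A) (Fin n → A) ℂ) : Prop :=
  ∀ (ρ : Matrix A A ℂ), IsDensity ρ → ∀ π : Equiv.Perm (Fin n),
    Λ ρ = permMat n A π * Λ ρ * (permMat n A π)ᴴ

/-- The optimal unilocal n-broadcasting fidelity of a bipartite state. -/
def fBroadcast [Fintype A] [DecidableEq A] [Fintype B] [DecidableEq B] (n : ℕ)
    (ρ : Matrix (A × B) (A × B) ℂ) : ℝ :=
  sSup {r | ∃ Λ : Matrix A A ℂ →ₗ[ℂ] Matrix (Fin n → A) (Fin n → A) ℂ, IsCPTP Λ ∧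
    r = (n : ℝ)⁻¹ * ∑ j : Fin n, fidelity ρ (reduceJ j (lext (B := B) Λ ρ))}

/-- Channel conjugated by the permutation unitary W_π. -/
def conjPerm [Fintype A] [DecidableEq A] {n : ℕ} (π : Equiv.Perm (Fin n))
    (Λ : Matrix A A ℂ →ₗ[ℂ] Matrix (Fin n → A) (Fin n → A) ℂ) :
    Matrix A A ℂ →ₗ[ℂ] Matrix (Fin n → A) (Fin n → A) ℂ where
  toFun ρ := permMat n A π * Λ ρ * (permMat n A π)ᴴ
  map_add' M N := by simp [map_add, Matrix.mul_add, Matrix.add_mul]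
  map_smul' c M := by simp [Matrix.mul_smul, Matrix.smul_mul]

/-- Symmetrization (1/n!) Σ_π W_π Λ(·) W_π†. -/
def symmetrize [Fintype A] [DecidableEq A] {n : ℕ}
    (Λ : Matrix A A ℂ →ₗ[ℂ] Matrix (Fin n → A) (Fin n → A) ℂ) :
    Matrix A A ℂ →ₗ[ℂ] Matrix (Fin n → A) (Fin n → A) ℂ :=
  ((n.factorial : ℂ))⁻¹ • ∑ π : Equiv.Perm (Fin n), conjPerm π Λ

/-- Partial transpose on the first (input) factor. -/
def ptransA (J : Matrix (A × O) (A × O) ℂ) : Matrix (A × O) (A × O) ℂ :=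
  of fun p q => J (q.1, p.2) (p.1, q.2)

/-- tr_A (X ρ_AB), contracting the A index: entry ((o,b),(o',b')) = Σ_{i,k} X(i,o)(k,o') ρ(k,b)(i,b'). -/
def traceContractA [Fintype A] (X : Matrix (A × O) (A × O) ℂ)
    (ρ : Matrix (A × B) (A × B) ℂ) : Matrix (O × B) (O × B) ℂ :=
  of fun p q => ∑ i, ∑ k, X (i, p.1) (k, q.1) * ρ (k, p.2) (i, q.2)

/-- A POVM. -/
def IsPOVM {I : Type*} [Fintype I] [Fintype A] [DecidableEq A]
    (M : I → Matrix A A ℂ) : Prop :=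
  (∀ i, (M i).PosSemidef) ∧ ∑ i, M i = 1

/-- Quantum-to-classical channel of a POVM: ρ ↦ Σᵢ tr(Mᵢρ)|i⟩⟨i|. -/
def qcChan {I : Type*} [Fintype I] [DecidableEq I] [Fintype A]
    (M : I → Matrix A A ℂ) : Matrix A A ℂ →ₗ[ℂ] Matrix I I ℂ where
  toFun ρ := of fun i j => if i = j then (M i * ρ).trace else 0
  map_add' X Y := by
    ext i j
    simp only [of_apply, Matrix.add_apply]
    split_ifs <;> simp [Matrix.mul_add]
  map_smul' c X := by
    ext i j
    simp only [of_apply, Matrix.smul_apply, RingHom.id_apply]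
    split_ifs <;> simp [Matrix.mul_smul]

/-- Classical broadcast of a POVM outcome into n copies: ρ ↦ Σᵢ tr(Mᵢρ)(|i⟩⟨i|)^{⊗n}. -/
def bcChan {I : Type*} [Fintype I] [DecidableEq I] [Fintype A] {n : ℕ} (hn : 0 < n)
    (M : I → Matrix A A ℂ) : Matrix A A ℂ →ₗ[ℂ] Matrix (Fin n → I) (Fin n → I) ℂ where
  toFun ρ := of fun f g =>
    if f = g ∧ (∀ k, f k = f ⟨0, hn⟩) then (M (f ⟨0, hn⟩) * ρ).trace else 0
  map_add' X Y := by
    ext f g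
    simp only [of_apply, Matrix.add_apply]
    split_ifs <;> simp [Matrix.mul_add]
  map_smul' c X := by
    ext f g
    simp only [of_apply, Matrix.smul_apply, RingHom.id_apply]
    split_ifs <;> simp [Matrix.mul_smul]

/-- Marginal keeping the first output copy (and the side system B). -/
def margKeep1 {A B : Type*} [Fintype A] [Fintype B]
    (M : Matrix ((A × A) × B) ((A × A) × B) ℂ) : Matrix (A × B) (A × B) ℂ :=
  of fun p q => ∑ c, M ((p.1, c), p.2) ((q.1, c), q.2)

/-- Marginal keeping the second output copy (and the side system B). -/
def margKeep2 {A B : Type*} [Fintype A] [Fintype B]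
    (M : Matrix ((A × A) × B) ((A × A) × B) ℂ) : Matrix (A × B) (A × B) ℂ :=
  of fun p q => ∑ c, M ((c, p.1), p.2) ((c, q.1), q.2)

/-- The two-qubit pure state |ψ_θ⟩ = cos θ|00⟩ + sin θ|11⟩. -/
def psiThetaVec (θ : ℝ) : Fin 2 × Fin 2 → ℂ := fun p =>
  if p = (0, 0) then ((Real.cos θ : ℝ) : ℂ) else if p = (1, 1) then ((Real.sin θ : ℝ) : ℂ) else 0

def psiTheta (θ : ℝ) : Matrix (Fin 2 × Fin 2) (Fin 2 × Fin 2) ℂ :=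
  vecMulVec (psiThetaVec θ) (star (psiThetaVec θ))

/-- The vector |v⟩ = |000⟩ + (1/√2)|101⟩ + (1/√2)|110⟩ defining the channel Ξ. -/
def xiVec : Fin 2 × Fin 2 × Fin 2 → ℂ := fun p =>
  if p = (0, 0, 0) then 1
  else if p = (1, 0, 1) then (((Real.sqrt 2 : ℝ) : ℂ))⁻¹
  else if p = (1, 1, 0) then (((Real.sqrt 2 : ℝ) : ℂ))⁻¹ else 0

/-- The Choi matrix J = |v⟩⟨v| of the channel Ξ. -/
def xiChoi : Matrix (Fin 2 × Fin 2 × Fin 2) (Fin 2 × Fin 2 × Fin 2) ℂ :=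
  vecMulVec xiVec (star xiVec)

open scoped MatrixOrder in
lemma msqrt_sq {n : Type*} [Fintype n] [DecidableEq n] {A : Matrix n n ℂ} (hA : A.PosSemidef) :
    msqrt (A ^ 2) = A := by
  have hA2 := hA.pow 2
  have key : CFC.sqrt (A ^ 2) = A := CFC.sqrt_sq A (nonneg_iff_posSemidef.mpr hA)
  rw [CFC.sqrt_eq_real_sqrt _ (nonneg_iff_posSemidef.mpr hA2),
    cfcₙ_eq_cfc (hf0 := Real.sqrt_zero), hA2.1.cfc_eq, IsHermitian.cfc,
    Unitary.conjStarAlgAut_apply] at key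
  rwa [msqrt, dif_pos hA2]

lemma msqrt_smul_of_mul_self {n : Type*} [Fintype n] [DecidableEq n] {P : Matrix n n ℂ}
    (hP : P.PosSemidef) (hPP : P * P = P) {c : ℝ} (hc : 0 ≤ c) :
    msqrt ((c : ℂ) • P) = (√c : ℂ) • P := by
  have hsq : ((√c : ℂ) • P) ^ 2 = (c : ℂ) • P := by
    rw [sq, smul_mul_smul_comm, hPP, ← Complex.ofReal_mul, Real.mul_self_sqrt hc]
  rw [← hsq, msqrt_sq (hP.smul (by exact_mod_cast Real.sqrt_nonneg c))]

lemma vecMulVec_mul_mul_vecMulVec {n : Type*} [Fintype n] (v : n → ℂ) (M : Matrix n n ℂ) :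
    vecMulVec v (star v) * M * vecMulVec v (star v)
      = (star v ⬝ᵥ M *ᵥ v) • vecMulVec v (star v) := by
  rw [vecMulVec_mul, vecMulVec_mul_vecMulVec, vecMulVec_smul, ← dotProduct_mulVec]

lemma fidelity_vecMulVec_left {n : Type*} [Fintype n] [DecidableEq n] {v : n → ℂ}
    (hv : star v ⬝ᵥ v = 1) (σ : Matrix n n ℂ) {t : ℝ} (ht : 0 ≤ t)
    (h : star v ⬝ᵥ σ *ᵥ v = t) :
    fidelity (vecMulVec v (star v)) σ = √t := by
  set P := vecMulVec v (star v)
  have hP : P.PosSemidef := posSemidef_vecMulVec_self_star v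
  have hPP : P * P = P := by
    rw [vecMulVec_mul_vecMulVec, hv, one_smul]
  have hsqrtP : msqrt P = P := by
    simpa using msqrt_smul_of_mul_self hP hPP zero_le_one
  rw [fidelity, hsqrtP, vecMulVec_mul_mul_vecMulVec, h, msqrt_smul_of_mul_self hP hPP ht,
    trace_smul, trace_vecMulVec, dotProduct_comm, hv]
  simp

lemma ptraceB_xiChoi : ptraceB xiChoi = 1 := by
  have h2 : ((√2 : ℝ) : ℂ)⁻¹ * ((√2 : ℝ) : ℂ)⁻¹ = 2⁻¹ := by
    rw [← mul_inv, ← Complex.ofReal_mul, Real.mul_self_sqrt zero_le_two]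
    norm_num
  ext i j
  fin_cases i <;> fin_cases j <;>
    norm_num [ptraceB, xiChoi, xiVec, vecMulVec_apply, Fintype.sum_prod_type, one_apply, h2]

lemma xiVec_swap (i : Fin 2) (p : Fin 2 × Fin 2) : xiVec (i, p.swap) = xiVec (i, p) := by
  obtain ⟨a, b⟩ := p
  fin_cases i <;> fin_cases a <;> fin_cases b <;> rfl

lemma choiAction_xiChoi_swap (ρ : Matrix (Fin 2) (Fin 2) ℂ) (p q : Fin 2 × Fin 2) :
    choiAction xiChoi ρ p q = choiAction xiChoi ρ p.swap q.swap := by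
  simp only [choiAction, xiChoi, LinearMap.coe_mk, AddHom.coe_mk, of_apply, vecMulVec_apply,
    Pi.star_apply, xiVec_swap]

lemma psiThetaVec_dotProduct_self (θ : ℝ) : star (psiThetaVec θ) ⬝ᵥ psiThetaVec θ = 1 := by
  have h := Real.cos_sq_add_sin_sq θ
  unfold psiThetaVec
  generalize Real.cos θ = c at h
  generalize Real.sin θ = s at h
  simp [dotProduct, Fintype.sum_prod_type, Prod.ext_iff, ← sq]
  exact_mod_cast h

/- The expectation is `∑ c, |∑ a b i, conj ψ(a,b) ψ(i,b) v(i,a,c)|²`; for `c = 1` the inner sum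
vanishes because `ψ_θ` is supported on the diagonal, and for `c = 0` it is `cos²θ + sin²θ/√2`. -/
lemma psiThetaVec_expectation_xi_marginal (θ : ℝ) :
    star (psiThetaVec θ) ⬝ᵥ
        margKeep1 (lext (B := Fin 2) (choiAction xiChoi) (psiTheta θ)) *ᵥ psiThetaVec θ =
      (((Real.cos θ ^ 2 + Real.sin θ ^ 2 / √2) ^ 2 : ℝ) : ℂ) := by
  unfold psiTheta psiThetaVec
  generalize Real.cos θ = c
  generalize Real.sin θ = s
  simp only [dotProduct, mulVec, margKeep1, lext, choiAction, xiChoi,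
    LinearMap.coe_mk, AddHom.coe_mk, of_apply, vecMulVec_apply, Pi.star_apply,
    Fintype.sum_prod_type, Fin.sum_univ_two]
  simp [xiVec, Prod.ext_iff]
  norm_cast
  have h2 : √2 * √2 = 2 := Real.mul_self_sqrt zero_le_two
  field_simp

theorem xi_fidelity_general (θ : ℝ) :
    xiChoi.PosSemidef ∧ ptraceB xiChoi = 1 ∧
    (∀ ρ : Matrix (Fin 2) (Fin 2) ℂ, IsDensity ρ → ∀ p q : Fin 2 × Fin 2,
      choiAction xiChoi ρ p q = choiAction xiChoi ρ p.swap q.swap) ∧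
    fidelity (psiTheta θ) (margKeep1 (lext (B := Fin 2) (choiAction xiChoi) (psiTheta θ))) =
      Real.cos θ ^ 2 + Real.sin θ ^ 2 / Real.sqrt 2 := by
  refine ⟨posSemidef_vecMulVec_self_star xiVec, ptraceB_xiChoi,
    fun ρ _ => choiAction_xiChoi_swap ρ, ?_⟩
  exact (fidelity_vecMulVec_left (psiThetaVec_dotProduct_self θ) _ (sq_nonneg _)
    (psiThetaVec_expectation_xi_marginal θ)).trans (Real.sqrt_sq (by positivity))

/-- Ξ is a valid symmetric broadcasting channel achieving fidelity cos²θ + sin²θ/√2 on ψ_θ. -/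
theorem xi_fidelity (θ : ℝ) (h0 : 0 < θ)
    (h1 : θ ≤ Real.arctan ((2 : ℝ) ^ (-(1 / 4 : ℝ)))) :
    xiChoi.PosSemidef ∧ ptraceB xiChoi = 1 ∧
    (∀ ρ : Matrix (Fin 2) (Fin 2) ℂ, IsDensity ρ → ∀ p q : Fin 2 × Fin 2,
      choiAction xiChoi ρ p q = choiAction xiChoi ρ p.swap q.swap) ∧
    fidelity (psiTheta θ) (margKeep1 (lext (B := Fin 2) (choiAction xiChoi) (psiTheta θ))) =
      Real.cos θ ^ 2 + Real.sin θ ^ 2 / Real.sqrt 2 :=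
  xi_fidelity_general θ

end QIT

end
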